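/- For every natural number n ≥ 1, the number of rooted labeled forests on n vertices equals the number of parking functions of length n. -/

import Mathlib

/-!  Parking functions and the parking algorithm. -/

/-- Parking algorithm: cars `0, 1, ..., n-1` (in Lean's 0-based indexing of `Fin n`,
representing cars `1, ..., n`) arrive in order; car `i` drives to its favorite
(1-indexed) space `p i` and parks in the first space `s ≥ p i` not occupied by an
earlier car.  `PA p i` is the space where car `i` actually parks. -/
noncomputable def PA {n : ℕ} (p : Fin n → ℕ) (i : Fin n) : ℕ :=
  sInf {s : ℕ | p i ≤ s ∧ ∀ j : Fin n, j < i → PA p j ≠ s}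
termination_by i.val
decreasing_by exact ‹_ < _›

/-- `p` is a parking function of length `n`: every favorite space is in `{1, ..., n}`
and every car ends up parked in a space `≤ n`. -/
def IsParkingFunction {n : ℕ} (p : Fin n → ℕ) : Prop :=
  (∀ i, 1 ≤ p i ∧ p i ≤ n) ∧ ∀ i, PA p i ≤ n

/-- The set (type) `PF_n` of parking functions of length `n`. -/
def ParkingFunction (n : ℕ) : Type :=
  {p : Fin n → ℕ // IsParkingFunction p}

instance {n : ℕ} : Finite (ParkingFunction n) := by
  apply Finite.of_injective
    (fun P : ParkingFunction n => fun i => (⟨P.1 i, Nat.lt_succ_of_le (P.2.1 i).2⟩ : Fin (n+1)))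
  intro P Q h
  apply Subtype.ext; funext i
  simpa [Fin.mk.injEq] using congrFun h i

noncomputable instance {n : ℕ} : Fintype (ParkingFunction n) := Fintype.ofFinite _

/-- `jumpAt p c` is the number of jumps of car `c`, i.e. `q_c - p_c`. -/
noncomputable def jumpAt {n : ℕ} (p : Fin n → ℕ) (c : Fin n) : ℕ := PA p c - p c

/-- `jump p` is the total number of jumps. -/
noncomputable def jump {n : ℕ} (p : Fin n → ℕ) : ℕ := ∑ c, jumpAt p c

/-- `luckyCount p k` is the number of cars `c` with `jump(p : c) = k`. -/
noncomputable def luckyCount {n : ℕ} (p : Fin n → ℕ) (k : ℕ) : ℕ :=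
  Set.ncard {c : Fin n | jumpAt p c = k}

/-- `lucky p` is the number of lucky cars, i.e. cars with no jumps. -/
noncomputable def lucky {n : ℕ} (p : Fin n → ℕ) : ℕ :=
  Set.ncard {c : Fin n | jumpAt p c = 0}

/-- Car `c` is critical: immediately after car `c` is parked, there is no empty space
among the spaces strictly to the right of its space `q_c` within `{1, ..., n}`. -/
def IsCritical {n : ℕ} (p : Fin n → ℕ) (c : Fin n) : Prop :=
  ∀ s : ℕ, PA p c < s → s ≤ n → ∃ j : Fin n, j ≤ c ∧ PA p j = s

/-- `critic p` is the number of critical cars. -/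
noncomputable def critic {n : ℕ} (p : Fin n → ℕ) : ℕ :=
  Set.ncard {c : Fin n | IsCritical p c}

/-!  Rooted labeled forests, encoded by their parent function. -/

/-- A parent function `par : Fin n → Option (Fin n)` (where `par v = none` means that
`v` is a root) encodes a rooted labeled forest on `n` vertices iff it has no cycles. -/
def IsForest {n : ℕ} (par : Fin n → Option (Fin n)) : Prop :=
  ∀ v : Fin n, ¬ Relation.TransGen (fun a b => par a = some b) v v

/-- The set (type) `F_n` of rooted labeled forests on `n` vertices. -/
def Forest (n : ℕ) : Type := {par : Fin n → Option (Fin n) // IsForest par}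

instance {n : ℕ} : Finite (Forest n) := Subtype.finite
noncomputable instance {n : ℕ} : Fintype (Forest n) := Fintype.ofFinite _

/-- `x` is a descendant of `v`: `v` lies on the (unique) path from the root of `x`'s
component to `x`, i.e. the ancestor chain of `x` reaches `v`. -/
def Descendant {n : ℕ} (par : Fin n → Option (Fin n)) (v x : Fin n) : Prop :=
  Relation.ReflTransGen (fun a b => par a = some b) x v

/-- `forestInvAt F v = inv(F : v)`, the number of pairs `(v, x)` with `v > x` and
`x` a descendant of `v`. -/
noncomputable def forestInvAt {n : ℕ} (F : Forest n) (v : Fin n) : ℕ :=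
  Set.ncard {x : Fin n | x < v ∧ Descendant F.1 v x}

/-- `forestInv F = inv(F)`, the total number of inversions of `F`. -/
noncomputable def forestInv {n : ℕ} (F : Forest n) : ℕ := ∑ v, forestInvAt F v

/-- `forestLeadCount F k` is the number of vertices `v` with `inv(F : v) = k`. -/
noncomputable def forestLeadCount {n : ℕ} (F : Forest n) (k : ℕ) : ℕ :=
  Set.ncard {v : Fin n | forestInvAt F v = k}

/-- `forestLead F = lead(F)`, the number of leaders of `F`. -/
noncomputable def forestLead {n : ℕ} (F : Forest n) : ℕ :=
  Set.ncard {v : Fin n | forestInvAt F v = 0}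

/-- `forestTree F = tree(F)`, the number of trees (connected components) of `F`,
i.e. the number of roots. -/
noncomputable def forestTree {n : ℕ} (F : Forest n) : ℕ :=
  Set.ncard {v : Fin n | F.1 v = none}

/-!
Send a parking function `p` to the forest in which the parent of car `i` is the car parked
in space `p i - 1` (car `i` is a root when `p i = 1`). The parking outcome `PA p` is then a
greedy ranking of this forest: each space is taken by the smallest car that is not yet parked
and whose parent is already parked. A forest has only one greedy ranking onto `{1, …, n}`, so
the forest determines `PA p` and hence `p`. Conversely, if `q` is the greedy ranking of a
forest, the preferences `p i = q (parent i) + 1` (and `1` at roots) form a parking function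
that parks car `i` at `q i` and whose forest is the given one.
-/

section GreedyRanking

variable {α : Type*} [LinearOrder α] {par : α → Option α} {q q' : α → ℕ}

/-- `q i` is the time at which vertex `i` is visited when, at every step, the smallest
unvisited vertex whose parent (if any) has already been visited is visited next. -/
structure IsGreedyRanking (par : α → Option α) (q : α → ℕ) : Prop where
  injective : Function.Injective q
  parent_lt : ∀ {i j}, par i = some j → q j < q i
  le_of_lt_of_parent_lt : ∀ {i x}, q i < q x → (∀ j, par x = some j → q j < q i) → i ≤ x

namespace IsGreedyRanking

lemma le_of_agree_below (hq : IsGreedyRanking par q) (hq' : IsGreedyRanking par q')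
    (hr : Set.range q = Set.range q') {s : ℕ} (hbelow : ∀ x, q' x < s → q x = q' x)
    {i i' : α} (hi : q i = s) (hi' : q' i' = s) : i ≤ i' := by
  rcases lt_trichotomy (q i') s with hlt | heq | hgt
  · obtain ⟨y, hy⟩ : q i' ∈ Set.range q' := hr ▸ ⟨i', rfl⟩
    obtain rfl : y = i' := hq.injective ((hbelow y (hy ▸ hlt)).trans hy)
    omega
  · exact (hq.injective (heq.trans hi.symm)).ge
  · refine hq.le_of_lt_of_parent_lt (hi ▸ hgt) fun j hj => ?_
    have := hq'.parent_lt hj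
    rw [hbelow j (by omega)]
    omega

theorem eq_of_range_eq (hq : IsGreedyRanking par q) (hq' : IsGreedyRanking par q')
    (hr : Set.range q = Set.range q') : q = q' := by
  have key : ∀ s x, q x = s → q' x = s := by
    intro s
    induction s using Nat.strong_induction_on with
    | _ s ih =>
      have below : ∀ x, q x < s → q' x = q x := fun x hx => ih _ hx x rfl
      have below' : ∀ x, q' x < s → q x = q' x := by
        intro x hx
        obtain ⟨y, hy⟩ : q' x ∈ Set.range q := hr ▸ ⟨x, rfl⟩
        obtain rfl : y = x := hq'.injective ((below y (hy ▸ hx)).trans hy)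
        exact hy
      intro x hx
      obtain ⟨i', hi'⟩ : s ∈ Set.range q' := hr ▸ ⟨x, hx⟩
      obtain rfl := le_antisymm (hq.le_of_agree_below hq' hr below' hx hi')
        (hq'.le_of_agree_below hq hr.symm below hi' hx)
      exact hi'
  exact funext fun x => (key _ x rfl).symm

end IsGreedyRanking

end GreedyRanking

variable {n : ℕ}

lemma IsGreedyRanking.isForest {par : Fin n → Option (Fin n)} {q : Fin n → ℕ}
    (hq : IsGreedyRanking par q) : IsForest par := by
  have hlt : ∀ a b, Relation.TransGen (fun a b => par a = some b) a b → q b < q a := by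
    intro a b h
    induction h with
    | single h => exact hq.parent_lt h
    | tail _ h ih => exact (hq.parent_lt h).trans ih
  exact fun v hv => lt_irrefl _ (hlt v v hv)

lemma IsForest.wellFounded {par : Fin n → Option (Fin n)} (hF : IsForest par) :
    WellFounded fun a b => par b = some a := by
  let child : Fin n → Fin n → Prop := fun a b => par b = some a
  have : IsTrans (Fin n) (Relation.TransGen child) := ⟨fun _ _ _ => Relation.TransGen.trans⟩
  have : Std.Irrefl (Relation.TransGen child) :=
    ⟨fun v hv => hF v (Relation.transGen_swap.mp hv)⟩
  exact Subrelation.wf (r := Relation.TransGen child) (fun h => .single h)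
    (Finite.wellFounded_of_trans_of_irrefl _)

section Greedy

variable (par : Fin n → Option (Fin n))

def greedyCandidates (S : Finset (Fin n)) : Finset (Fin n) :=
  {i | i ∉ S ∧ ∀ j, par i = some j → j ∈ S}

-- The fallback `s` is never taken for a forest: see `greedyCandidates_greedyVisited_nonempty`.
noncomputable def greedyVertex : Fin n → Fin n
  | s =>
    let S := Finset.univ.image fun t : {t : Fin n // t < s} => greedyVertex t
    if h : (greedyCandidates par S).Nonempty then (greedyCandidates par S).min' h else s
termination_by s => s.val
decreasing_by exact t.2

noncomputable def greedyVisited (s : Fin n) : Finset (Fin n) :=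
  (Finset.Iio s).image (greedyVertex par)

lemma greedyVertex_eq (s : Fin n) :
    greedyVertex par s =
      if h : (greedyCandidates par (greedyVisited par s)).Nonempty then
        (greedyCandidates par (greedyVisited par s)).min' h else s := by
  have : greedyVisited par s =
      Finset.univ.image fun t : {t : Fin n // t < s} => greedyVertex par t := by
    ext
    simp [greedyVisited]
  rw [this, greedyVertex]

variable {par}

lemma mem_greedyCandidates {S : Finset (Fin n)} {i : Fin n} :
    i ∈ greedyCandidates par S ↔ i ∉ S ∧ ∀ j, par i = some j → j ∈ S := by
  simp [greedyCandidates]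

lemma greedyCandidates_nonempty (hF : IsForest par) {S : Finset (Fin n)} {v : Fin n}
    (hv : v ∉ S) : (greedyCandidates par S).Nonempty := by
  obtain ⟨u, hu, hmin⟩ := hF.wellFounded.has_min {u | u ∉ S} ⟨v, hv⟩
  refine ⟨u, mem_greedyCandidates.mpr ⟨hu, fun j hj => ?_⟩⟩
  by_contra hjS
  exact hmin j hjS hj

lemma greedyCandidates_greedyVisited_nonempty (hF : IsForest par) (s : Fin n) :
    (greedyCandidates par (greedyVisited par s)).Nonempty := by
  have hcard : (greedyVisited par s).card < (Finset.univ : Finset (Fin n)).card := by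
    calc (greedyVisited par s).card ≤ (Finset.Iio s).card := Finset.card_image_le
      _ < _ := by simp
  obtain ⟨v, -, hv⟩ := Finset.exists_mem_notMem_of_card_lt_card hcard
  exact greedyCandidates_nonempty hF hv

lemma greedyVertex_mem (hF : IsForest par) (s : Fin n) :
    greedyVertex par s ∈ greedyCandidates par (greedyVisited par s) := by
  rw [greedyVertex_eq, dif_pos (greedyCandidates_greedyVisited_nonempty hF s)]
  exact Finset.min'_mem _ _

lemma greedyVertex_le (hF : IsForest par) {s x : Fin n}
    (hx : x ∈ greedyCandidates par (greedyVisited par s)) : greedyVertex par s ≤ x := by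
  rw [greedyVertex_eq, dif_pos (greedyCandidates_greedyVisited_nonempty hF s)]
  exact Finset.min'_le _ _ hx

lemma greedyVertex_injective (hF : IsForest par) : Function.Injective (greedyVertex par) := by
  have hne : ∀ {t s}, t < s → greedyVertex par t ≠ greedyVertex par s := fun {t s} hts h =>
    (mem_greedyCandidates.mp (greedyVertex_mem hF s)).1
      (Finset.mem_image.mpr ⟨t, Finset.mem_Iio.mpr hts, h⟩)
  intro t s h
  by_contra hts
  rcases lt_or_gt_of_ne hts with hlt | hgt
  exacts [hne hlt h, hne hgt h.symm]

end Greedy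

theorem IsForest.exists_isGreedyRanking {par : Fin n → Option (Fin n)} (hF : IsForest par) :
    ∃ q, IsGreedyRanking par q ∧ Set.range q = Set.Icc 1 n := by
  let τ := Equiv.ofBijective _ (Finite.injective_iff_bijective.mp (greedyVertex_injective hF))
  have τ_symm {i} : greedyVertex par (τ.symm i) = i := Equiv.ofBijective_apply_symm_apply _ _ i
  have mem_visited {x s} : x ∈ greedyVisited par s ↔ τ.symm x < s := by
    simp only [greedyVisited, Finset.mem_image, Finset.mem_Iio]
    constructor
    · rintro ⟨t, ht, rfl⟩
      rwa [Equiv.ofBijective_symm_apply_apply]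
    · exact fun h => ⟨τ.symm x, h, τ_symm⟩
  refine ⟨fun i => τ.symm i + 1,
    ⟨fun a b h => ?_, fun {i j} h => ?_, fun {i x} h hpar => ?_⟩, ?_⟩
  · exact τ.symm.injective (Fin.ext (Nat.succ_injective h))
  · have := (mem_greedyCandidates.mp (τ_symm ▸ greedyVertex_mem hF (τ.symm i))).2 j h
    exact Nat.succ_lt_succ (mem_visited.mp this)
  · rw [← τ_symm (i := i)]
    refine greedyVertex_le hF (mem_greedyCandidates.mpr ⟨?_, fun j hj => ?_⟩)
    · rw [mem_visited, Fin.lt_def]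
      omega
    · have := hpar j hj
      rw [mem_visited, Fin.lt_def]
      omega
  · ext m
    constructor
    · rintro ⟨i, rfl⟩
      exact ⟨Nat.le_add_left 1 _, (τ.symm i).isLt⟩
    · rintro ⟨h1, hn⟩
      refine ⟨τ ⟨m - 1, by omega⟩, ?_⟩
      show (τ.symm (τ _) : ℕ) + 1 = m
      rw [Equiv.symm_apply_apply]
      exact Nat.sub_add_cancel h1

section Parking

variable {p : Fin n → ℕ}

lemma PA_eq_sInf (p : Fin n → ℕ) (i : Fin n) :
    PA p i = sInf {s : ℕ | p i ≤ s ∧ ∀ j : Fin n, j < i → PA p j ≠ s} := by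
  rw [PA]

lemma le_PA_and_PA_ne (p : Fin n → ℕ) (i : Fin n) :
    p i ≤ PA p i ∧ ∀ j : Fin n, j < i → PA p j ≠ PA p i := by
  have hne : {s : ℕ | p i ≤ s ∧ ∀ j : Fin n, j < i → PA p j ≠ s}.Nonempty := by
    refine ⟨p i + Finset.univ.sup (PA p) + 1, by omega, fun j _ h => ?_⟩
    have := Finset.le_sup (f := PA p) (Finset.mem_univ j)
    omega
  rw [PA_eq_sInf]
  exact Nat.sInf_mem hne

lemma le_PA (p : Fin n → ℕ) (i : Fin n) : p i ≤ PA p i := (le_PA_and_PA_ne p i).1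

lemma PA_injective (p : Fin n → ℕ) : Function.Injective (PA p) := by
  intro a b hab
  by_contra hne
  rcases lt_or_gt_of_ne hne with h | h
  · exact (le_PA_and_PA_ne p b).2 a h hab
  · exact (le_PA_and_PA_ne p a).2 b h hab.symm

lemma PA_le {i : Fin n} {s : ℕ} (hs : p i ≤ s) (hfree : ∀ j : Fin n, j < i → PA p j ≠ s) :
    PA p i ≤ s := by
  rw [PA_eq_sInf]
  exact Nat.sInf_le ⟨hs, hfree⟩

lemma exists_lt_PA_eq {i : Fin n} {s : ℕ} (hs : p i ≤ s) (hlt : s < PA p i) :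
    ∃ j < i, PA p j = s := by
  by_contra! h
  exact (PA_le hs h).not_gt hlt

lemma PA_eq_of_le_of_injective {q : Fin n → ℕ} (hle : p ≤ q) (hinj : Function.Injective q)
    (hgap : ∀ i s, p i ≤ s → s < q i → ∃ j < i, q j = s) : PA p = q := by
  funext i
  induction i using WellFoundedLT.induction with
  | _ i ih =>
    refine le_antisymm (PA_le (hle i) fun j hj h => ?_) (not_lt.mp fun hlt => ?_)
    · exact hj.ne (hinj ((ih j hj).symm.trans h))
    · obtain ⟨j, hj, hqj⟩ := hgap i _ (le_PA p i) hlt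
      exact (le_PA_and_PA_ne p i).2 j hj ((ih j hj).trans hqj)

lemma range_PA (hp : IsParkingFunction p) : Set.range (PA p) = Set.Icc 1 n := by
  have hsub : Finset.univ.image (PA p) ⊆ Finset.Icc 1 n := by
    simp only [Finset.subset_iff, Finset.mem_image, Finset.mem_univ, true_and,
      Finset.mem_Icc, forall_exists_index, forall_apply_eq_imp_iff]
    exact fun i => ⟨(hp.1 i).1.trans (le_PA p i), hp.2 i⟩
  have heq := Finset.eq_of_subset_of_card_le hsub (by
    rw [Finset.card_image_of_injective _ (PA_injective p)]; simp)
  simpa using congrArg (fun s : Finset ℕ => (s : Set ℕ)) heq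

noncomputable def parkingParent (p : Fin n → ℕ) (i : Fin n) : Option (Fin n) :=
  if h : ∃ j, PA p j + 1 = p i then some h.choose else none

lemma parkingParent_eq_some_iff {i j : Fin n} :
    parkingParent p i = some j ↔ PA p j + 1 = p i := by
  unfold parkingParent
  split_ifs with h
  · rw [Option.some_inj]
    exact ⟨fun hj => hj ▸ h.choose_spec,
      fun hj => PA_injective p (Nat.succ_injective (h.choose_spec.trans hj.symm))⟩
  · exact ⟨nofun, fun hj => h ⟨j, hj⟩⟩

lemma parkingParent_eq_none_iff (hp : IsParkingFunction p) {i : Fin n} :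
    parkingParent p i = none ↔ p i = 1 := by
  unfold parkingParent
  rw [dite_eq_right_iff]
  have := hp.1 i
  constructor
  · intro h
    by_contra hne
    obtain ⟨j, hj⟩ : p i - 1 ∈ Set.range (PA p) := by
      rw [range_PA hp]; exact ⟨by omega, by omega⟩
    exact Option.some_ne_none _ (h ⟨j, by omega⟩)
  · rintro h ⟨j, hj⟩
    have := (hp.1 j).1.trans (le_PA p j)
    omega

lemma isGreedyRanking_PA (hp : IsParkingFunction p) :
    IsGreedyRanking (parkingParent p) (PA p) where
  injective := PA_injective p
  parent_lt {i j} h := by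
    have := le_PA p i
    rw [parkingParent_eq_some_iff] at h
    omega
  le_of_lt_of_parent_lt {i x} hlt hpar := by
    have hx : p x ≤ PA p i := by
      cases h : parkingParent p x with
      | none => rw [(parkingParent_eq_none_iff hp).mp h]; exact (hp.1 i).1.trans (le_PA p i)
      | some j => have := hpar j h; rw [parkingParent_eq_some_iff] at h; omega
    obtain ⟨j, hj, hji⟩ := exists_lt_PA_eq hx hlt
    exact (PA_injective p hji ▸ hj).le

noncomputable def parkingOfRanking (par : Fin n → Option (Fin n)) (q : Fin n → ℕ)
    (i : Fin n) : ℕ :=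
  (par i).elim 1 fun j => q j + 1

lemma parkingOfRanking_parkingParent_PA (hp : IsParkingFunction p) :
    parkingOfRanking (parkingParent p) (PA p) = p := by
  funext i
  unfold parkingOfRanking
  cases h : parkingParent p i with
  | none => exact ((parkingParent_eq_none_iff hp).mp h).symm
  | some j => exact parkingParent_eq_some_iff.mp h

end Parking

section Bijection

variable {par : Fin n → Option (Fin n)} {q : Fin n → ℕ}

lemma one_le_parkingOfRanking (i : Fin n) : 1 ≤ parkingOfRanking par q i := by
  unfold parkingOfRanking
  cases par i <;> simp

lemma PA_parkingOfRanking (hq : IsGreedyRanking par q) (hr : Set.range q = Set.Icc 1 n) :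
    PA (parkingOfRanking par q) = q := by
  refine PA_eq_of_le_of_injective (fun i => ?_) hq.injective fun i s hs hlt => ?_
  · unfold parkingOfRanking
    cases h : par i with
    | none => exact (hr.subset ⟨i, rfl⟩).1
    | some j => exact hq.parent_lt h
  · have hqi := hr.subset ⟨i, rfl⟩
    have h1 := one_le_parkingOfRanking (par := par) (q := q) i
    obtain ⟨x, rfl⟩ : s ∈ Set.range q := hr ▸ ⟨h1.trans hs, hlt.le.trans hqi.2⟩
    have hxi : x ≤ i := hq.le_of_lt_of_parent_lt hlt fun j hj => by
      simp only [parkingOfRanking, hj, Option.elim_some] at hs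
      omega
    exact ⟨x, hxi.lt_of_ne (ne_of_apply_ne q hlt.ne), rfl⟩

lemma isParkingFunction_parkingOfRanking (hq : IsGreedyRanking par q)
    (hr : Set.range q = Set.Icc 1 n) : IsParkingFunction (parkingOfRanking par q) := by
  have hPA : ∀ i, PA (parkingOfRanking par q) i ≤ n := fun i => by
    rw [PA_parkingOfRanking hq hr]
    exact (hr.subset ⟨i, rfl⟩).2
  exact ⟨fun i => ⟨one_le_parkingOfRanking i, (le_PA _ i).trans (hPA i)⟩, hPA⟩

lemma parkingParent_parkingOfRanking (hq : IsGreedyRanking par q)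
    (hr : Set.range q = Set.Icc 1 n) : parkingParent (parkingOfRanking par q) = par := by
  funext i
  cases h : par i with
  | none =>
    rw [parkingParent_eq_none_iff (isParkingFunction_parkingOfRanking hq hr)]
    simp [parkingOfRanking, h]
  | some j =>
    rw [parkingParent_eq_some_iff, PA_parkingOfRanking hq hr]
    simp [parkingOfRanking, h]

end Bijection

noncomputable def ParkingFunction.toForest (P : ParkingFunction n) : Forest n :=
  ⟨parkingParent P.1, (isGreedyRanking_PA P.2).isForest⟩

lemma ParkingFunction.toForest_injective :
    Function.Injective (ParkingFunction.toForest (n := n)) := by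
  intro P P' h
  have hpar : parkingParent P.1 = parkingParent P'.1 := congrArg Subtype.val h
  have hPA : PA P.1 = PA P'.1 := (isGreedyRanking_PA P.2).eq_of_range_eq
    (hpar ▸ isGreedyRanking_PA P'.2) (by rw [range_PA P.2, range_PA P'.2])
  apply Subtype.ext
  rw [← parkingOfRanking_parkingParent_PA P.2, ← parkingOfRanking_parkingParent_PA P'.2,
    hpar, hPA]

lemma ParkingFunction.toForest_surjective :
    Function.Surjective (ParkingFunction.toForest (n := n)) := by
  rintro ⟨par, hF⟩
  obtain ⟨q, hq, hr⟩ := hF.exists_isGreedyRanking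
  exact ⟨⟨_, isParkingFunction_parkingOfRanking hq hr⟩,
    Subtype.ext (parkingParent_parkingOfRanking hq hr)⟩

theorem card_forest_eq_card_parkingFunction_general (n : ℕ) :
    Nat.card (Forest n) = Nat.card (ParkingFunction n) :=
  (Nat.card_eq_of_bijective _
    ⟨ParkingFunction.toForest_injective, ParkingFunction.toForest_surjective⟩).symm

/-- The number of rooted labeled forests on `n` vertices equals the
number of parking functions of length `n`. -/
theorem card_forest_eq_card_parkingFunction (n : ℕ) (hn : 1 ≤ n) :
    Nat.card (Forest n) = Nat.card (ParkingFunction n) :=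
  card_forest_eq_card_parkingFunction_general n
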